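/- arXiv:2101.01813 — 2 statements merged into one kernel-verified Lean document; each statement's English description precedes it below -/
import Mathlib

section
/- In the free group F₂ with generating set S_γ, there do not exist s ∈ S_γ and g ∈ F₂ with g ≠ 1 such that |sg| = |g| or |gs| = |g|. -/
section Defs

variable {G : Type*} [Group G]

/-- Word length with respect to a generating set `S`: the least `n` such that `g`
is a product of `n` elements of `S`. -/
noncomputable def wlen (S : Set G) (g : G) : ℕ :=
  sInf {n | ∃ l : List G, (∀ x ∈ l, x ∈ S) ∧ l.length = n ∧ l.prod = g}

/-- Word metric: `d(g,h) = |h⁻¹ g|`. -/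
noncomputable def wdist (S : Set G) (x y : G) : ℝ := wlen S (y⁻¹ * x)

/-- Gromov product `(x,y)_w = ½ (d(x,w) + d(w,y) − d(x,y))`. -/
noncomputable def gp (S : Set G) (x y w : G) : ℝ :=
  (wdist S x w + wdist S w y - wdist S x y) / 2

/-- The word metric is `δ`-hyperbolic (Gromov's four-point condition). -/
def IsDeltaHyperbolic (S : Set G) (δ : ℝ) : Prop :=
  ∀ x y z w : G, gp S x y w ≥ min (gp S x z w) (gp S y z w) - δ

/-- A group is virtually cyclic if it has a cyclic subgroup of finite index. -/
def VirtuallyCyclic (G : Type*) [Group G] : Prop :=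
  ∃ H : Subgroup G, IsCyclic H ∧ H.FiniteIndex

/-- `GenCon(g)`: the average word length of the conjugates of `g`
by the generators in `S`. -/
noncomputable def genCon (S : Set G) (g : G) : ℝ :=
  (∑ᶠ s ∈ S, (wlen S (s⁻¹ * g * s) : ℝ)) / S.ncard

/-- Conjugation curvature `κ(g) = (|g| − GenCon(g)) / |g|`. -/
noncomputable def kappa (S : Set G) (g : G) : ℝ :=
  ((wlen S g : ℝ) - genCon S g) / (wlen S g)

/-- `k`-spherical conjugation curvature
`κ_k(g) = (|g| − (1/#S_k) Σ_{s ∈ S_k} d(gs,s)) / |g|`; note `d(gs,s) = |s⁻¹ g s|`. -/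
noncomputable def kappaK (S : Set G) (k : ℕ) (g : G) : ℝ :=
  ((wlen S g : ℝ) -
      (∑ᶠ s ∈ {x : G | wlen S x = k}, (wlen S (s⁻¹ * g * s) : ℝ)) /
        ({x : G | wlen S x = k} : Set G).ncard) / (wlen S g)

end Defs

/-- The free group of rank 2. -/
abbrev F2 := FreeGroup Bool

namespace F2Gen

/-- The generator `a`. -/
def a : F2 := FreeGroup.of true

/-- The generator `b`. -/
def b : F2 := FreeGroup.of false

end F2Gen

open F2Gen

/-- The word `w = ababa`. -/
def wγ : F2 := a * b * a * b * a

/-- The generating set `S_γ = {a, a⁻¹, b, b⁻¹, w, w⁻¹}` of `F₂`. -/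
def Sγ : Set F2 := {a, a⁻¹, b, b⁻¹, wγ, wγ⁻¹}

/-! Every element of `S_γ` has odd length in the letters `a, b`, so the sign character
`χ : F₂ → {±1}` sending `a` and `b` to `-1` also sends every element of `S_γ` to `-1`.
Hence `χ g = (-1) ^ |g|`: the parity of `|g|` is determined by `g`, and multiplying by a
generator flips it, so `|s g| ≠ |g|` and `|g s| ≠ |g|`. -/

section WordLength

variable {G M : Type*} [Group G] [Monoid M] {S : Set G}

theorem exists_list_length_eq_wlen (hS : Submonoid.closure S = ⊤) (g : G) :
    ∃ l : List G, (∀ x ∈ l, x ∈ S) ∧ l.length = wlen S g ∧ l.prod = g := by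
  obtain ⟨l, hlS, hl⟩ := Submonoid.exists_list_of_mem_closure (hS ▸ Submonoid.mem_top g)
  exact Nat.sInf_mem (s := {n | ∃ l : List G, (∀ x ∈ l, x ∈ S) ∧ l.length = n ∧ l.prod = g})
    ⟨l.length, l, hlS, rfl, hl⟩

theorem map_eq_pow_wlen (hS : Submonoid.closure S = ⊤) (χ : G →* M) {c : M}
    (hχ : ∀ s ∈ S, χ s = c) (g : G) : χ g = c ^ wlen S g := by
  obtain ⟨l, hlS, hlen, rfl⟩ := exists_list_length_eq_wlen hS g
  rw [← hlen, map_list_prod, List.prod_eq_pow_card _ c, List.length_map]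
  simpa using fun x hx => hχ x (hlS x hx)

theorem wlen_ne_of_map_eq_neg (hS : Submonoid.closure S = ⊤) {χ : G →* ℤˣ}
    (hχ : ∀ s ∈ S, χ s = -1) {g h : G} (hgh : χ h = -χ g) : wlen S h ≠ wlen S g := by
  intro hlen
  rw [map_eq_pow_wlen hS χ hχ, map_eq_pow_wlen hS χ hχ g, hlen] at hgh
  exact units_ne_neg_self _ hgh

end WordLength

def signF2 : F2 →* ℤˣ :=
  FreeGroup.lift fun _ => -1

theorem signF2_eq_neg_one : ∀ s ∈ Sγ, signF2 s = -1 := by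
  rintro s (rfl | rfl | rfl | rfl | rfl | rfl) <;>
    simp [signF2, wγ, a, b]

theorem submonoid_closure_Sγ : Submonoid.closure Sγ = ⊤ := by
  refine (Submonoid.eq_top_iff' _).2 fun g => ?_
  induction g using FreeGroup.induction_on with
  | C1 => exact one_mem _
  | of x => exact Submonoid.subset_closure (by cases x <;> simp [Sγ, a, b])
  | inv_of x => exact Submonoid.subset_closure (by cases x <;> simp [Sγ, a, b])
  | mul x y hx hy => exact mul_mem hx hy

/-- With respect to `S_γ`, there are no `s ∈ S_γ` and `g ≠ 1` with `|sg| = |g|`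
or `|gs| = |g|`. -/
theorem no_length_preserving :
    ¬ ∃ s ∈ Sγ, ∃ g : F2, g ≠ 1 ∧
      (wlen Sγ (s * g) = wlen Sγ g ∨ wlen Sγ (g * s) = wlen Sγ g) := by
  rintro ⟨s, hs, g, -, hlen | hlen⟩ <;>
    exact wlen_ne_of_map_eq_neg submonoid_closure_Sγ signF2_eq_neg_one
      (by simp [signF2_eq_neg_one s hs]) hlen
end

section
/- In the free group F₂ with generating set S_γ: if g ∈ F₂ has a geodesic spelling whose first three letters are b, a, a, then g has no geodesic spelling whose first letter is a⁻¹. Similarly, if g′ ∈ F₂ has a geodesic spelling whose first three letters are b⁻¹, a⁻¹, a⁻¹, then g′ has no geodesic spelling whose first letter is a. -/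
open F2Gen

/-!
The word length with respect to `Sγ` has an exact formula in terms of the reduced word `L` of
an element: `|x| = length L - 2 * savings L`, where `savings L` is the best total gain of a
parsing of `L` into letters, 4-letter subwords `abab, baba` of `w` and their inverses (each
spelled by two generators, e.g. `abab = w a⁻¹`: gain 1), and copies of `w^{±1}` (one generator:
gain 2). Spelling out an optimal parsing gives `≤`. For `≥`, the right-hand side changes by at
most one under left multiplication by a generator: for `a` and `b` this is immediate, for `w`
it is a case analysis on how much of `w` cancels.

With the formula, a case analysis on the cancellation between `a a` and the reduced word of `p`
shows that `|a a p| = |p| + 2` forces `|a b a a p| = |b a a p| + 1`. A geodesic spelling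
`b, a, a, …` of `g = b a a p` gives `|a a p| = |p| + 2`, while one starting with `a⁻¹` would
give `|a g| = |g| - 1`. The second statement is the image of the first under the automorphism
`a ↦ a⁻¹, b ↦ b⁻¹`, which preserves `Sγ`.
-/

section WordLength

variable {G : Type*} [Group G] {S : Set G}

def IsGeodesicSpelling (S : Set G) (l : List G) (g : G) : Prop :=
  (∀ x ∈ l, x ∈ S) ∧ l.prod = g ∧ l.length = wlen S g

theorem wlen_prod_le_length {l : List G} (hl : ∀ x ∈ l, x ∈ S) : wlen S l.prod ≤ l.length :=
  Nat.sInf_le ⟨l, hl, rfl, rfl⟩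

theorem exists_isGeodesicSpelling (hS : Submonoid.closure S = ⊤) (g : G) :
    ∃ l, IsGeodesicSpelling S l g := by
  obtain ⟨l, hl, rfl⟩ := Submonoid.exists_list_of_mem_closure (hS ▸ Submonoid.mem_top g)
  obtain ⟨l', hl', hlen, hprod⟩ : wlen S l.prod ∈ _ := Nat.sInf_mem ⟨l.length, l, hl, rfl, rfl⟩
  exact ⟨l', hl', hprod, hlen⟩

theorem wlen_mul_le (hS : Submonoid.closure S = ⊤) (g h : G) :
    wlen S (g * h) ≤ wlen S g + wlen S h := by
  obtain ⟨l₁, hl₁, rfl, hlen₁⟩ := exists_isGeodesicSpelling hS g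
  obtain ⟨l₂, hl₂, rfl, hlen₂⟩ := exists_isGeodesicSpelling hS h
  rw [← hlen₁, ← hlen₂, ← List.length_append, ← List.prod_append]
  exact wlen_prod_le_length (by simpa [or_imp, forall_and] using And.intro hl₁ hl₂)

theorem IsGeodesicSpelling.append_right (hS : Submonoid.closure S = ⊤) {l₁ l₂ : List G} {g : G}
    (h : IsGeodesicSpelling S (l₁ ++ l₂) g) : IsGeodesicSpelling S l₂ l₂.prod := by
  obtain ⟨hl, rfl, hlen⟩ := h
  simp only [List.mem_append, or_imp, forall_and] at hl
  refine ⟨hl.2, rfl, le_antisymm ?_ (wlen_prod_le_length hl.2)⟩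
  have := wlen_prod_le_length hl.1
  have := wlen_mul_le hS l₁.prod l₂.prod
  rw [List.length_append, List.prod_append] at hlen
  omega

theorem le_wlen_of_forall_mul_le (hS : Submonoid.closure S = ⊤) {ψ : G → ℤ} (h₁ : ψ 1 ≤ 0)
    (hψ : ∀ s ∈ S, ∀ g, ψ (s * g) ≤ ψ g + 1) (g : G) : ψ g ≤ wlen S g := by
  obtain ⟨l, hl, rfl, hlen⟩ := exists_isGeodesicSpelling hS g
  rw [← hlen]
  clear hlen
  induction l with
  | nil => simpa using h₁
  | cons s l ih =>
    simp only [List.forall_mem_cons] at hl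
    have := hψ s hl.1 l.prod
    have := ih hl.2
    simp only [List.prod_cons, List.length_cons]
    omega

theorem wlen_map_le (hS : Submonoid.closure S = ⊤) (φ : G →* G) (hφ : ∀ s ∈ S, φ s ∈ S)
    (g : G) : wlen S (φ g) ≤ wlen S g := by
  obtain ⟨l, hl, rfl, hlen⟩ := exists_isGeodesicSpelling hS g
  rw [← hlen, map_list_prod, ← List.length_map φ]
  exact wlen_prod_le_length (by simpa using fun x hx => hφ x (hl x hx))

theorem IsGeodesicSpelling.map (hS : Submonoid.closure S = ⊤) {φ : G →* G}
    (hφ : ∀ s ∈ S, φ s ∈ S) (hφφ : Function.Involutive φ) {l : List G} {g : G}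
    (h : IsGeodesicSpelling S l g) : IsGeodesicSpelling S (l.map φ) (φ g) := by
  obtain ⟨hl, rfl, hlen⟩ := h
  refine ⟨by simpa using fun x hx => hφ x (hl x hx), (map_list_prod φ l).symm, ?_⟩
  have := wlen_map_le hS φ hφ (φ l.prod)
  rw [hφφ] at this
  have := wlen_map_le hS φ hφ l.prod
  rw [List.length_map]
  omega

end WordLength

namespace FreeGroup

variable {α : Type*} [DecidableEq α]

theorem toWord_mk_mul_of_isReduced {u : List (α × Bool)} {x : FreeGroup α}
    (h : IsReduced (u ++ x.toWord)) : (mk u * x).toWord = u ++ x.toWord := by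
  conv_lhs => rw [← mk_toWord (x := x), mul_mk]
  rw [toWord_mk, h.reduce_eq]

theorem toWord_mk_singleton_mul (y : α × Bool) (x : FreeGroup α) :
    (mk [y] * x).toWord = match x.toWord with
      | [] => [y]
      | z :: t => if y.1 = z.1 ∧ y.2 = !z.2 then t else y :: z :: t := by
  conv_lhs => rw [← mk_toWord (x := x), mul_mk]
  rw [toWord_mk, List.singleton_append, reduce.cons, reduce_toWord]
  cases x.toWord <;> rfl

theorem exists_toWord_mk_mul {u : List (α × Bool)} (hu : IsReduced u) (x : FreeGroup α) :
    ∃ j ≤ u.length, ∃ L, x.toWord = invRev (u.drop j) ++ L ∧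
      (mk u * x).toWord = u.take j ++ L := by
  induction u with
  | nil => exact ⟨0, le_rfl, x.toWord, by simp [invRev], by simp [← one_eq_mk]⟩
  | cons y u ih =>
    obtain ⟨j, hj, L, hx, hux⟩ := ih (hu.infix (List.suffix_cons y u).isInfix)
    have hmul : mk (y :: u) * x = mk [y] * (mk u * x) := by rw [← mul_assoc, mul_mk]; rfl
    rw [hmul, toWord_mk_singleton_mul, hux]
    rcases j with _ | j
    · rcases L with _ | ⟨z, L⟩
      · exact ⟨1, by simp, [], by simpa using hx, rfl⟩
      · by_cases hyz : y.1 = z.1 ∧ y.2 = !z.2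
        · refine ⟨0, by simp, L, ?_, by simp [hyz]⟩
          obtain ⟨y₁, y₂⟩ := y
          obtain ⟨z₁, z₂⟩ := z
          simp_all [invRev]
        · exact ⟨1, by simp, z :: L, by simpa using hx, by simp [hyz]⟩
    · rcases u with _ | ⟨v, u⟩
      · simp at hj
      · have hyv : ¬ (y.1 = v.1 ∧ y.2 = !v.2) := fun ⟨h₁, h₂⟩ => by
          simp only [isReduced_cons_cons] at hu
          simpa [h₂] using hu.1 h₁
        exact ⟨j + 2, by simpa using hj, L, by simpa using hx, by simp [hyv]⟩

end FreeGroup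

namespace F2Gen

open FreeGroup

-- Letters of reduced words; `𝐀` and `𝐁` stand for `a⁻¹` and `b⁻¹`.
local notation "𝐚" => ((true, true) : Bool × Bool)
local notation "𝐀" => ((true, false) : Bool × Bool)
local notation "𝐛" => ((false, true) : Bool × Bool)
local notation "𝐁" => ((false, false) : Bool × Bool)

theorem closure_Sγ : Submonoid.closure Sγ = ⊤ := by
  have hmem : ∀ s ∈ Sγ, s ∈ Submonoid.closure Sγ := fun s hs => Submonoid.subset_closure hs
  refine eq_top_iff.mpr fun x _ => FreeGroup.induction_on x (Submonoid.one_mem _) ?_ ?_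
    (fun _ _ => Submonoid.mul_mem _)
  · rintro (_ | _)
    · exact hmem b (by simp [Sγ])
    · exact hmem a (by simp [Sγ])
  · rintro (_ | _) -
    · exact hmem b⁻¹ (by simp [Sγ])
    · exact hmem a⁻¹ (by simp [Sγ])

theorem mk_singleton_mem_Sγ (y : Bool × Bool) : FreeGroup.mk [y] ∈ Sγ := by
  obtain ⟨_ | _, _ | _⟩ := y
  · exact (by simp [Sγ] : b⁻¹ ∈ Sγ)
  · exact (by simp [Sγ] : b ∈ Sγ)
  · exact (by simp [Sγ] : a⁻¹ ∈ Sγ)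
  · exact (by simp [Sγ] : a ∈ Sγ)

theorem wlen_mk_append_le (u v : List (Bool × Bool)) :
    wlen Sγ (mk (u ++ v)) ≤ wlen Sγ (mk u) + wlen Sγ (mk v) := by
  rw [← mul_mk]
  exact wlen_mul_le closure_Sγ _ _

def IsW4 (u : List (Bool × Bool)) : Prop :=
  u ∈ [[𝐚, 𝐛, 𝐚, 𝐛], [𝐛, 𝐚, 𝐛, 𝐚], [𝐀, 𝐁, 𝐀, 𝐁], [𝐁, 𝐀, 𝐁, 𝐀]]

def IsW5 (u : List (Bool × Bool)) : Prop :=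
  u ∈ [[𝐚, 𝐛, 𝐚, 𝐛, 𝐚], [𝐀, 𝐁, 𝐀, 𝐁, 𝐀]]

instance : DecidablePred IsW4 := fun u => inferInstanceAs (Decidable (u ∈ _))
instance : DecidablePred IsW5 := fun u => inferInstanceAs (Decidable (u ∈ _))

def savings : List (Bool × Bool) → ℕ
  | [] => 0
  | c :: t => max (savings t) (max
      (if IsW4 (c :: t.take 3) then savings (t.drop 3) + 1 else 0)
      (if IsW5 (c :: t.take 4) then savings (t.drop 4) + 2 else 0))
termination_by u => u.length

theorem savings_cons (c : Bool × Bool) (t : List (Bool × Bool)) :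
    savings (c :: t) = max (savings t) (max
      (if IsW4 (c :: t.take 3) then savings (t.drop 3) + 1 else 0)
      (if IsW5 (c :: t.take 4) then savings (t.drop 4) + 2 else 0)) := by
  rw [savings]

@[simp] theorem savings_nil : savings [] = 0 := by
  rw [savings]

theorem savings_le_savings_cons (c : Bool × Bool) (t : List (Bool × Bool)) :
    savings t ≤ savings (c :: t) := by
  rw [savings_cons]
  exact le_max_left _ _

theorem savings_drop_le (k : ℕ) (t : List (Bool × Bool)) : savings (t.drop k) ≤ savings t := by
  induction t generalizing k with
  | nil => simp
  | cons c t ih =>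
    cases k with
    | zero => simp
    | succ k => exact (ih k).trans (savings_le_savings_cons c t)

theorem savings_cons_of_not_isW (c : Bool × Bool) (t : List (Bool × Bool))
    (h₄ : ¬ IsW4 (c :: t.take 3)) (h₅ : ¬ IsW5 (c :: t.take 4)) : savings (c :: t) = savings t := by
  rw [savings_cons, if_neg h₄, if_neg h₅]
  simp

theorem IsW4.length_eq {u : List (Bool × Bool)} (hu : IsW4 u) : u.length = 4 := by
  simp only [IsW4, List.mem_cons, List.not_mem_nil, or_false] at hu
  rcases hu with rfl | rfl | rfl | rfl <;> rfl

theorem IsW5.length_eq {u : List (Bool × Bool)} (hu : IsW5 u) : u.length = 5 := by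
  simp only [IsW5, List.mem_cons, List.not_mem_nil, or_false] at hu
  rcases hu with rfl | rfl <;> rfl

theorem IsW4.add_one_le_savings_append {u : List (Bool × Bool)} (hu : IsW4 u)
    (t : List (Bool × Bool)) : savings t + 1 ≤ savings (u ++ t) := by
  obtain ⟨c, v, rfl⟩ := List.exists_cons_of_length_eq_add_one hu.length_eq
  have hv : v.length = 3 := by simpa using hu.length_eq
  rw [List.cons_append, savings_cons, List.take_left' hv, List.drop_left' hv, if_pos hu]
  omega

theorem IsW5.add_two_le_savings_append {u : List (Bool × Bool)} (hu : IsW5 u)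
    (t : List (Bool × Bool)) : savings t + 2 ≤ savings (u ++ t) := by
  obtain ⟨c, v, rfl⟩ := List.exists_cons_of_length_eq_add_one hu.length_eq
  have hv : v.length = 4 := by simpa using hu.length_eq
  rw [List.cons_append, savings_cons, List.take_left' hv, List.drop_left' hv, if_pos hu]
  omega

theorem IsW5.isW4_tail {u : List (Bool × Bool)} (hu : IsW5 u) : IsW4 u.tail := by
  simp only [IsW5, List.mem_cons, List.not_mem_nil, or_false] at hu
  rcases hu with rfl | rfl <;> decide

theorem savings_cons_le (c : Bool × Bool) (t : List (Bool × Bool)) :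
    savings (c :: t) ≤ savings t + 1 := by
  rw [savings_cons]
  refine max_le (by omega) (max_le ?_ ?_)
  · split_ifs
    · have := savings_drop_le 3 t
      omega
    · omega
  · split_ifs with h
    · have := h.isW4_tail.add_one_le_savings_append (t.drop 4)
      rw [List.tail_cons, List.take_append_drop] at this
      omega
    · omega

-- A pattern gains at most 2 per 5 letters; the `+ 6` pays for one reaching past `u` into `t`.
theorem savings_append_le :
    ∀ u t : List (Bool × Bool), savings (u ++ t) ≤ savings t + (2 * u.length + 6) / 5
  | [], t => by simp
  | [c], t => by simpa using savings_cons_le c t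
  | c :: d :: u, t => by
    have hdrop (k : ℕ) : savings ((d :: u ++ t).drop k) ≤
        savings t + if k < u.length + 1 then (2 * (u.length + 1 - k) + 6) / 5 else 0 := by
      rw [List.drop_append]
      split_ifs with hk
      · have := savings_append_le ((d :: u).drop k) (t.drop (k - (d :: u).length))
        have := savings_drop_le (k - (d :: u).length) t
        simp only [List.length_drop, List.length_cons] at *
        omega
      · rw [List.drop_eq_nil_of_le (by rw [List.length_cons]; omega), List.nil_append]
        simpa using savings_drop_le _ t
    have := savings_append_le (d :: u) t
    have := hdrop 3
    have := hdrop 4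
    rw [List.cons_append, savings_cons]
    simp only [List.length_cons] at *
    split_ifs at * <;> omega
termination_by u => u.length

theorem wlen_mk_le_of_isW4 {u : List (Bool × Bool)} (hu : IsW4 u) : wlen Sγ (mk u) ≤ 2 := by
  simp only [IsW4, List.mem_cons, List.not_mem_nil, or_false] at hu
  rcases hu with rfl | rfl | rfl | rfl
  · exact (by decide : [wγ, a⁻¹].prod = mk [𝐚, 𝐛, 𝐚, 𝐛]) ▸ wlen_prod_le_length (by simp [Sγ])
  · exact (by decide : [a⁻¹, wγ].prod = mk [𝐛, 𝐚, 𝐛, 𝐚]) ▸ wlen_prod_le_length (by simp [Sγ])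
  · exact (by decide : [wγ⁻¹, a].prod = mk [𝐀, 𝐁, 𝐀, 𝐁]) ▸ wlen_prod_le_length (by simp [Sγ])
  · exact (by decide : [a, wγ⁻¹].prod = mk [𝐁, 𝐀, 𝐁, 𝐀]) ▸ wlen_prod_le_length (by simp [Sγ])

theorem wlen_mk_le_of_isW5 {u : List (Bool × Bool)} (hu : IsW5 u) : wlen Sγ (mk u) ≤ 1 := by
  simp only [IsW5, List.mem_cons, List.not_mem_nil, or_false] at hu
  rcases hu with rfl | rfl
  · exact (by decide : [wγ].prod = mk [𝐚, 𝐛, 𝐚, 𝐛, 𝐚]) ▸ wlen_prod_le_length (by simp [Sγ])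
  · exact (by decide : [wγ⁻¹].prod = mk [𝐀, 𝐁, 𝐀, 𝐁, 𝐀]) ▸ wlen_prod_le_length (by simp [Sγ])

theorem wlen_mk_add_two_mul_savings_le :
    ∀ L : List (Bool × Bool), wlen Sγ (mk L) + 2 * savings L ≤ L.length
  | [] => by simpa [← one_eq_mk] using wlen_prod_le_length (S := Sγ) (l := []) (by simp)
  | c :: t => by
    have hsplit (k : ℕ) : wlen Sγ (mk (c :: t)) ≤
        wlen Sγ (mk (c :: t.take k)) + wlen Sγ (mk (t.drop k)) := by
      simpa using wlen_mk_append_le (c :: t.take k) (t.drop k)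
    have bound₁ : wlen Sγ (mk (c :: t)) + 2 * savings t ≤ t.length + 1 := by
      have := hsplit 0
      have := wlen_prod_le_length (l := [mk [c]]) (by simpa using mk_singleton_mem_Sγ c)
      have := wlen_mk_add_two_mul_savings_le t
      simp only [List.take_zero, List.drop_zero, List.prod_singleton, List.length_singleton] at *
      omega
    have bound₄ (h : IsW4 (c :: t.take 3)) :
        wlen Sγ (mk (c :: t)) + 2 * (savings (t.drop 3) + 1) ≤ t.length + 1 := by
      have := hsplit 3
      have := wlen_mk_le_of_isW4 h
      have := h.length_eq
      have := wlen_mk_add_two_mul_savings_le (t.drop 3)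
      simp only [List.length_cons, List.length_take, List.length_drop] at *
      omega
    have bound₅ (h : IsW5 (c :: t.take 4)) :
        wlen Sγ (mk (c :: t)) + 2 * (savings (t.drop 4) + 2) ≤ t.length + 1 := by
      have := hsplit 4
      have := wlen_mk_le_of_isW5 h
      have := h.length_eq
      have := wlen_mk_add_two_mul_savings_le (t.drop 4)
      simp only [List.length_cons, List.length_take, List.length_drop] at *
      omega
    rw [savings_cons, List.length_cons]
    split_ifs with h₄ h₅ h₅
    · have := bound₄ h₄
      have := bound₅ h₅
      omega
    · have := bound₄ h₄
      omega
    · have := bound₅ h₅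
      omega
    · omega
termination_by L => L.length

def cost (x : F2) : ℤ := x.toWord.length - 2 * savings x.toWord

theorem abs_cost_mk_singleton_mul_sub_le (y : Bool × Bool) (x : F2) :
    |cost (mk [y] * x) - cost x| ≤ 1 := by
  obtain ⟨j, hj, L, hx, hyx⟩ := exists_toWord_mk_mul (u := [y]) IsReduced.singleton x
  replace hj : j ≤ 1 := hj
  interval_cases j
  · change x.toWord = [(y.1, !y.2)] ++ L at hx
    have := savings_cons_le (y.1, !y.2) L
    have := savings_le_savings_cons (y.1, !y.2) L
    simp only [cost, hx, hyx, List.take_zero, List.nil_append, List.singleton_append,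
      List.length_cons, abs_le]
    omega
  · change (mk [y] * x).toWord = [y] ++ L at hyx
    have := savings_cons_le y L
    have := savings_le_savings_cons y L
    simp only [cost, hx, hyx, List.drop_one, List.tail_cons, invRev_empty, List.nil_append,
      List.singleton_append, List.length_cons, abs_le]
    omega

theorem abs_cost_wγ_mul_sub_le (x : F2) : |cost (wγ * x) - cost x| ≤ 1 := by
  obtain ⟨j, hj, L, hx, hwx⟩ := exists_toWord_mk_mul (u := [𝐚, 𝐛, 𝐚, 𝐛, 𝐚]) (by simp) x
  have hx_red := hx ▸ isReduced_toWord (x := x)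
  have hwx_red := hwx ▸ isReduced_toWord (x := mk [𝐚, 𝐛, 𝐚, 𝐛, 𝐚] * x)
  rw [show wγ = mk [𝐚, 𝐛, 𝐚, 𝐛, 𝐚] by decide, cost, cost, hx, hwx, abs_le]
  replace hj : j ≤ 5 := hj
  -- `j` letters of `w` survive. In the middle cases the reducedness of both words constrains the
  -- first letter of `L` enough to decide every pattern that starts before `L`.
  interval_cases j <;> simp [invRev] at hx_red hwx_red ⊢
  · have := IsW5.add_two_le_savings_append (u := [𝐀, 𝐁, 𝐀, 𝐁, 𝐀]) (by decide) L
    have := savings_append_le [𝐀, 𝐁, 𝐀, 𝐁, 𝐀] L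
    simp only [List.cons_append, List.nil_append, List.length_cons, List.length_nil] at *
    omega
  · have := IsW4.add_one_le_savings_append (u := [𝐀, 𝐁, 𝐀, 𝐁]) (by decide) L
    have := savings_append_le [𝐀, 𝐁, 𝐀, 𝐁] L
    simp only [List.cons_append, List.nil_append, List.length_cons, List.length_nil] at *
    rcases L with _ | ⟨⟨_ | _, _ | _⟩, L⟩ <;>
      simp [savings_cons_of_not_isW, IsW4, IsW5] at * <;> omega
  · rcases L with _ | ⟨⟨_ | _, _ | _⟩, L⟩ <;>
      simp [savings_cons_of_not_isW, IsW4, IsW5] at * <;> omega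
  · rcases L with _ | ⟨⟨_ | _, _ | _⟩, L⟩ <;>
      simp [savings_cons_of_not_isW, IsW4, IsW5] at * <;> omega
  · have := IsW4.add_one_le_savings_append (u := [𝐚, 𝐛, 𝐚, 𝐛]) (by decide) L
    have := savings_append_le [𝐚, 𝐛, 𝐚, 𝐛] L
    simp only [List.cons_append, List.nil_append, List.length_cons, List.length_nil] at *
    rcases L with _ | ⟨⟨_ | _, _ | _⟩, L⟩ <;>
      simp [savings_cons_of_not_isW, IsW4, IsW5] at * <;> omega
  · have := IsW5.add_two_le_savings_append (u := [𝐚, 𝐛, 𝐚, 𝐛, 𝐚]) (by decide) L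
    have := savings_append_le [𝐚, 𝐛, 𝐚, 𝐛, 𝐚] L
    simp only [List.cons_append, List.nil_append, List.length_cons, List.length_nil] at *
    omega

theorem cost_mul_le {s : F2} (hs : s ∈ Sγ) (x : F2) : cost (s * x) ≤ cost x + 1 := by
  have key {t : F2} (ht : ∀ x, |cost (t * x) - cost x| ≤ 1) (x : F2) :
      cost (t * x) ≤ cost x + 1 ∧ cost (t⁻¹ * x) ≤ cost x + 1 := by
    have h₁ := abs_le.mp (ht x)
    have h₂ := abs_le.mp (ht (t⁻¹ * x))
    rw [mul_inv_cancel_left] at h₂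
    omega
  have ha := key (abs_cost_mk_singleton_mul_sub_le 𝐚) x
  have hb := key (abs_cost_mk_singleton_mul_sub_le 𝐛) x
  have hw := key abs_cost_wγ_mul_sub_le x
  rcases hs with rfl | rfl | rfl | rfl | rfl | rfl
  exacts [ha.1, ha.2, hb.1, hb.2, hw.1, hw.2]

theorem wlen_eq_cost (x : F2) : (wlen Sγ x : ℤ) = cost x := by
  refine le_antisymm ?_
    (le_wlen_of_forall_mul_le closure_Sγ (by simp [cost]) (fun _ hs => cost_mul_le hs) x)
  have := wlen_mk_add_two_mul_savings_le x.toWord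
  rw [mk_toWord] at this
  rw [cost]
  omega

theorem wlen_abaa_mul (p : F2) (h : wlen Sγ (a * (a * p)) = wlen Sγ p + 2) :
    wlen Sγ (a * (b * (a * (a * p)))) = wlen Sγ (b * (a * (a * p))) + 1 := by
  have hp_red := isReduced_toWord (x := p)
  have hq_red := isReduced_toWord (x := a * (a * p))
  zify at h ⊢
  rw [wlen_eq_cost, wlen_eq_cost] at h ⊢
  rw [show a * (a * p) = mk [𝐚, 𝐚] * p from (mul_assoc _ _ _).symm] at h hq_red ⊢
  obtain ⟨j, hj, L, hp, hq⟩ := exists_toWord_mk_mul (u := [𝐚, 𝐚]) (by simp) p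
  generalize mk [𝐚, 𝐚] * p = q at h hq hq_red ⊢
  suffices key : IsReduced (𝐚 :: 𝐛 :: q.toWord) ∧
      savings (𝐚 :: 𝐛 :: q.toWord) = savings (𝐛 :: q.toWord) by
    obtain ⟨hred, hsav⟩ := key
    have hbq : (b * q).toWord = 𝐛 :: q.toWord :=
      toWord_mk_mul_of_isReduced (u := [𝐛]) (hred.infix (List.suffix_cons _ _).isInfix)
    have habq : (a * (b * q)).toWord = 𝐚 :: 𝐛 :: q.toWord := by
      rw [← hbq]
      exact toWord_mk_mul_of_isReduced (u := [𝐚]) (by rwa [hbq])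
    rw [cost, cost, habq, hbq, hsav]
    simp only [List.length_cons]
    push_cast
    ring
  rw [cost, cost, hp, hq] at h
  rw [hp] at hp_red
  rw [hq] at hq_red ⊢
  replace hj : j ≤ 2 := hj
  -- If both `a`s cancel, `h` fails; if one cancels, `h` forces `p` to continue with `a⁻¹ b⁻¹`.
  interval_cases j <;> simp [invRev] at h hp_red hq_red ⊢
  · have := savings_cons_le 𝐀 L
    simp [savings_cons_of_not_isW, IsW4, IsW5] at h
    omega
  · have := savings_le_savings_cons 𝐚 L
    rcases L with _ | ⟨⟨_ | _, _ | _⟩, L⟩ <;>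
      simp [savings_cons_of_not_isW, IsW4, IsW5] at * <;> omega
  · exact ⟨hq_red, by simp [savings_cons_of_not_isW, IsW4, IsW5]⟩

theorem head?_ne_inv_a_of_take_eq_baa {l l' : List F2} {g : F2}
    (hl : IsGeodesicSpelling Sγ l g) (htake : l.take 3 = [b, a, a])
    (hl' : IsGeodesicSpelling Sγ l' g) : l'.head? ≠ some a⁻¹ := by
  intro hhead
  obtain ⟨t', rfl⟩ := List.head?_eq_some_iff.mp hhead
  obtain ⟨t, rfl⟩ : ∃ t, l = [b] ++ ([a, a] ++ t) :=
    ⟨l.drop 3, (List.take_append_drop 3 l).symm.trans (by rw [htake]; rfl)⟩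
  have haap := (hl.append_right closure_Sγ).2.2
  have hp := ((hl.append_right closure_Sγ).append_right closure_Sγ).2.2
  have hag := (hl'.append_right (l₁ := [a⁻¹]) closure_Sγ).2.2
  obtain ⟨-, rfl, hg⟩ := hl
  obtain ⟨-, hg', hlen'⟩ := hl'
  have ht' : t'.prod = a * ([b] ++ ([a, a] ++ t)).prod := by
    rw [← hg', List.prod_cons, mul_inv_cancel_left]
  rw [ht'] at hag
  simp only [List.cons_append, List.nil_append, List.prod_cons, List.length_cons] at *
  have := wlen_abaa_mul t.prod (by omega)
  omega

def invGenerators : F2 →* F2 := FreeGroup.lift fun c => (FreeGroup.of c)⁻¹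

theorem invGenerators_a : invGenerators a = a⁻¹ := lift_apply_of

theorem invGenerators_b : invGenerators b = b⁻¹ := lift_apply_of

theorem invGenerators_involutive : Function.Involutive invGenerators := fun x => by
  rw [← MonoidHom.comp_apply, ext_hom (invGenerators.comp invGenerators) (MonoidHom.id F2)
    (fun c => by simp [invGenerators]), MonoidHom.id_apply]

theorem invGenerators_mem_Sγ {s : F2} (hs : s ∈ Sγ) : invGenerators s ∈ Sγ := by
  have hw : invGenerators wγ = wγ⁻¹ := by
    simp only [wγ, _root_.map_mul, invGenerators_a, invGenerators_b]
    group
  rcases hs with rfl | rfl | rfl | rfl | rfl | rfl <;>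
    simp [Sγ, invGenerators_a, invGenerators_b, hw]

end F2Gen

/-- If `g ∈ F₂` has a geodesic spelling (w.r.t. `S_γ`) whose first three letters are
`b, a, a`, then `g` has no geodesic spelling whose first letter is `a⁻¹`; similarly,
if `g'` has a geodesic spelling starting with `b⁻¹, a⁻¹, a⁻¹`, then `g'` has no
geodesic spelling starting with `a`. -/
theorem b_double_a_lemma :
    (∀ g : F2, (∃ l : List F2, (∀ x ∈ l, x ∈ Sγ) ∧ l.prod = g ∧
        l.length = wlen Sγ g ∧ l.take 3 = [b, a, a]) →
      ¬ ∃ l' : List F2, (∀ x ∈ l', x ∈ Sγ) ∧ l'.prod = g ∧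
        l'.length = wlen Sγ g ∧ l'.head? = some a⁻¹) ∧
    (∀ g' : F2, (∃ l : List F2, (∀ x ∈ l, x ∈ Sγ) ∧ l.prod = g' ∧
        l.length = wlen Sγ g' ∧ l.take 3 = [b⁻¹, a⁻¹, a⁻¹]) →
      ¬ ∃ l' : List F2, (∀ x ∈ l', x ∈ Sγ) ∧ l'.prod = g' ∧
        l'.length = wlen Sγ g' ∧ l'.head? = some a) := by
  constructor
  · rintro g ⟨l, hl, hprod, hlen, htake⟩ ⟨l', hl', hprod', hlen', hhead⟩
    exact head?_ne_inv_a_of_take_eq_baa ⟨hl, hprod, hlen⟩ htake ⟨hl', hprod', hlen'⟩ hhead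
  · rintro g ⟨l, hl, hprod, hlen, htake⟩ ⟨l', hl', hprod', hlen', hhead⟩
    have hσ := fun {l} (h : IsGeodesicSpelling Sγ l g) =>
      h.map closure_Sγ (fun _ => invGenerators_mem_Sγ) invGenerators_involutive
    refine head?_ne_inv_a_of_take_eq_baa (hσ ⟨hl, hprod, hlen⟩) ?_ (hσ ⟨hl', hprod', hlen'⟩) ?_
    · simp [← List.map_take, htake, invGenerators_a, invGenerators_b]
    · simp [hhead, invGenerators_a]
end
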